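/- Let Z₁ ~ N(0, I_ℓ) and Z₂ ~ N(0, Σ) be mean-zero ℓ-dimensional Gaussian vectors, where Σ is a symmetric positive definite ℓ×ℓ matrix with eigenvalues λ₁,…,λ_ℓ. Then d_TV(Z₁, Z₂)² ≤ Σ_{i=1}^ℓ (√λ_i − 1)² / (λ_i + 1) ≤ ‖Σ − I‖_F². -/

import Mathlib

open MeasureTheory Matrix

/-- Total variation distance between two measures:
`d_TV(μ,ν) = sup_{Borel A} |μ(A) − ν(A)|`. -/
noncomputable def dTV {α : Type*} [MeasurableSpace α] (μ ν : Measure α) : ℝ :=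
  ⨆ A : {s : Set α // MeasurableSet s}, |(μ A.1).toReal - (ν A.1).toReal|

/-- Density of the Gaussian measure `N(0, S)` on `ℝ^ℓ`. -/
noncomputable def gaussPdf (ℓ : ℕ) (S : Matrix (Fin ℓ) (Fin ℓ) ℝ) (x : Fin ℓ → ℝ) : ℝ :=
  (2 * Real.pi) ^ (-(ℓ : ℝ) / 2) * S.det ^ (-(1 : ℝ) / 2) *
    Real.exp (-(x ⬝ᵥ S⁻¹.mulVec x) / 2)

/-- The Gaussian measure `N(0, S)` on `ℝ^ℓ`, for an invertible covariance matrix `S`. -/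
noncomputable def gaussMeasure (ℓ : ℕ) (S : Matrix (Fin ℓ) (Fin ℓ) ℝ) :
    Measure (Fin ℓ → ℝ) :=
  volume.withDensity fun x => ENNReal.ofReal (gaussPdf ℓ S x)

/-- The Frobenius norm `‖V‖_F = √(Σ_{i,j} v_{ij}²)`. -/
noncomputable def frobNorm {m n : ℕ} (V : Matrix (Fin m) (Fin n) ℝ) : ℝ :=
  Real.sqrt (∑ i, ∑ j, V i j ^ 2)

/-! ### Auxiliary lemmas -/

section Aux

open Real

lemma aux_one_sub_prod_le {ι : Type*} (s : Finset ι) (x : ι → ℝ)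
    (h0 : ∀ i ∈ s, 0 ≤ x i) (h1 : ∀ i ∈ s, x i ≤ 1) :
    1 - ∏ i ∈ s, x i ≤ ∑ i ∈ s, (1 - x i) := by
  induction s using Finset.cons_induction with
  | empty => simp
  | cons a s hnot ih =>
    rw [Finset.prod_cons, Finset.sum_cons]
    have hmem : ∀ i ∈ s, i ∈ Finset.cons a s hnot := fun i hi => Finset.mem_cons_of_mem hi
    have hprod0 : 0 ≤ ∏ i ∈ s, x i := Finset.prod_nonneg fun i hi => h0 i (hmem i hi)
    have hprod1 : ∏ i ∈ s, x i ≤ 1 :=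
      Finset.prod_le_one (fun i hi => h0 i (hmem i hi)) (fun i hi => h1 i (hmem i hi))
    have ihs := ih (fun i hi => h0 i (hmem i hi)) (fun i hi => h1 i (hmem i hi))
    have ha0 := h0 a (Finset.mem_cons_self a s)
    have ha1 := h1 a (Finset.mem_cons_self a s)
    nlinarith

lemma gauss_integrable {ℓ : ℕ} (c : Fin ℓ → ℝ) (hc : ∀ i, 0 < c i) :
    Integrable (fun v : Fin ℓ → ℝ => Real.exp (-∑ i, c i * v i ^ 2)) := by
  have h : (fun v : Fin ℓ → ℝ => Real.exp (-∑ i, c i * v i ^ 2))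
      = fun v => ∏ i, Real.exp (-(c i) * v i ^ 2) := by
    funext v
    rw [← Real.exp_sum]
    congr 1
    rw [← Finset.sum_neg_distrib]
    congr 1; funext i; ring
  rw [h]
  exact Integrable.fintype_prod fun i => integrable_exp_neg_mul_sq (hc i)

lemma gauss_integral {ℓ : ℕ} (c : Fin ℓ → ℝ) :
    ∫ v : Fin ℓ → ℝ, Real.exp (-∑ i, c i * v i ^ 2) = ∏ i, Real.sqrt (π / c i) := by
  have h : (fun v : Fin ℓ → ℝ => Real.exp (-∑ i, c i * v i ^ 2))
      = fun v => ∏ i, Real.exp (-(c i) * v i ^ 2) := by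
    funext v
    rw [← Real.exp_sum]
    congr 1
    rw [← Finset.sum_neg_distrib]
    congr 1; funext i; ring
  rw [h, integral_fintype_prod_volume_eq_prod (f := fun i (x : ℝ) => Real.exp (-(c i) * x ^ 2))]
  exact Finset.prod_congr rfl fun i _ => integral_gaussian (c i)

noncomputable def rotEquiv {ℓ : ℕ} (Q : Matrix (Fin ℓ) (Fin ℓ) ℝ)
    (h1 : Q * Qᵀ = 1) (h2 : Qᵀ * Q = 1) :
    (Fin ℓ → ℝ) ≃ₗ[ℝ] (Fin ℓ → ℝ) :=
  LinearEquiv.ofLinear (Matrix.toLin' Q) (Matrix.toLin' Qᵀ)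
    (by rw [← Matrix.toLin'_mul, h1, Matrix.toLin'_one])
    (by rw [← Matrix.toLin'_mul, h2, Matrix.toLin'_one])

lemma rot_mp {ℓ : ℕ} (Q : Matrix (Fin ℓ) (Fin ℓ) ℝ) (h1 : Q * Qᵀ = 1) :
    MeasurePreserving (fun v : Fin ℓ → ℝ => Q.mulVec v) volume volume := by
  have hdet : Q.det * Q.det = 1 := by
    have h := congrArg Matrix.det h1
    rwa [Matrix.det_mul, Matrix.det_transpose, Matrix.det_one] at h
  have hdet0 : Q.det ≠ 0 := by intro h; rw [h] at hdet; norm_num at hdet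
  have habs : |Q.det⁻¹| = 1 := by
    rcases mul_self_eq_one_iff.mp hdet with h | h <;> norm_num [h]
  constructor
  · exact (Matrix.toLin' Q).continuous_of_finiteDimensional.measurable
  · have h := Real.map_matrix_volume_pi_eq_smul_volume_pi (M := Q) hdet0
    have heq : (fun v : Fin ℓ → ℝ => Q.mulVec v) = ⇑(Matrix.toLin' Q) := by
      funext v; simp [Matrix.toLin'_apply]
    rw [heq, h, habs]
    simp

lemma rot_emb {ℓ : ℕ} (Q : Matrix (Fin ℓ) (Fin ℓ) ℝ) (h1 : Q * Qᵀ = 1) (h2 : Qᵀ * Q = 1) :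
    MeasurableEmbedding (fun v : Fin ℓ → ℝ => Q.mulVec v) := by
  have heq : (fun v : Fin ℓ → ℝ => Q.mulVec v)
      = ⇑((rotEquiv Q h1 h2).toContinuousLinearEquiv.toHomeomorph) := by
    funext v
    show Q.mulVec v = (rotEquiv Q h1 h2) v
    simp [rotEquiv, Matrix.toLin'_apply]
  rw [heq]
  exact (rotEquiv Q h1 h2).toContinuousLinearEquiv.toHomeomorph.measurableEmbedding

lemma quad_form {ℓ : ℕ} (d : Fin ℓ → ℝ) (Q : Matrix (Fin ℓ) (Fin ℓ) ℝ)
    (h2 : Qᵀ * Q = 1) (v : Fin ℓ → ℝ) :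
    (Q.mulVec v) ⬝ᵥ (Q * Matrix.diagonal d * Qᵀ).mulVec (Q.mulVec v)
      = ∑ i, d i * v i ^ 2 := by
  rw [Matrix.mulVec_mulVec, mul_assoc, h2, mul_one]
  have h3 : Q.mulVec v = Matrix.vecMul v Qᵀ := by
    rw [Matrix.vecMul_transpose]
  rw [h3, ← Matrix.dotProduct_mulVec, Matrix.mulVec_mulVec, ← mul_assoc, h2, one_mul]
  simp [Matrix.mulVec_diagonal, dotProduct]
  exact Finset.sum_congr rfl fun i _ => by ring

lemma frob_eq {ℓ : ℕ} (lam : Fin ℓ → ℝ) (Q : Matrix (Fin ℓ) (Fin ℓ) ℝ)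
    (h1 : Q * Qᵀ = 1) (h2 : Qᵀ * Q = 1)
    (S : Matrix (Fin ℓ) (Fin ℓ) ℝ) (hspec : S = Q * Matrix.diagonal lam * Qᵀ) :
    ∑ i, ∑ j, (S - 1) i j ^ 2 = ∑ i, (lam i - 1) ^ 2 := by
  have hV : S - 1 = Q * Matrix.diagonal (fun i => lam i - 1) * Qᵀ := by
    rw [hspec, show Matrix.diagonal (fun i => lam i - 1)
        = Matrix.diagonal lam - 1 by rw [← Matrix.diagonal_one, Matrix.diagonal_sub]]
    rw [Matrix.mul_sub, Matrix.sub_mul, mul_one]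
    congr 1
    rw [h1]
  have hVt : (S - 1)ᵀ = S - 1 := by
    rw [hV, Matrix.transpose_mul, Matrix.transpose_mul, Matrix.transpose_transpose,
      Matrix.diagonal_transpose, ← mul_assoc]
  have key : ∀ V : Matrix (Fin ℓ) (Fin ℓ) ℝ, ∑ i, ∑ j, V i j ^ 2 = Matrix.trace (V * Vᵀ) := by
    intro V
    simp [Matrix.trace, Matrix.mul_apply, Matrix.diag, sq, Finset.mul_sum]
  rw [key, hVt, hV]
  set D := Matrix.diagonal (fun i => lam i - 1) with hD
  rw [show Q * D * Qᵀ * (Q * D * Qᵀ) = Q * (D * D) * Qᵀ by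
    rw [mul_assoc (Q * D) Qᵀ (Q * D * Qᵀ), ← mul_assoc Qᵀ (Q * D) Qᵀ, ← mul_assoc Qᵀ Q D,
      h2, one_mul, ← mul_assoc, mul_assoc Q D D]]
  rw [Matrix.trace_mul_cycle, ← mul_assoc, h2, one_mul, Matrix.diagonal_mul_diagonal,
    Matrix.trace_diagonal]
  exact Finset.sum_congr rfl fun i _ => (sq _).symm

lemma term_id (l : ℝ) (hl : 0 < l) :
    1 - 2 * Real.sqrt l / (l + 1) = (Real.sqrt l - 1) ^ 2 / (l + 1) := by
  have h1 : (0:ℝ) < l + 1 := by linarith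
  have hs : Real.sqrt l ^ 2 = l := Real.sq_sqrt hl.le
  field_simp
  nlinarith [hs]

lemma term_le (l : ℝ) (hl : 0 < l) :
    (Real.sqrt l - 1) ^ 2 / (l + 1) ≤ (l - 1) ^ 2 := by
  have h1 : (0:ℝ) < l + 1 := by linarith
  have hs : Real.sqrt l ^ 2 = l := Real.sq_sqrt hl.le
  have hs0 : 0 ≤ Real.sqrt l := Real.sqrt_nonneg l
  rw [div_le_iff₀ h1]
  nlinarith [sq_nonneg (Real.sqrt l - 1), sq_nonneg (Real.sqrt l + 1),
    sq_nonneg (Real.sqrt l * (Real.sqrt l - 1))]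

lemma term_mem (l : ℝ) (hl : 0 < l) :
    0 ≤ 2 * Real.sqrt l / (l + 1) ∧ 2 * Real.sqrt l / (l + 1) ≤ 1 := by
  have h1 : (0:ℝ) < l + 1 := by linarith
  have hs : Real.sqrt l ^ 2 = l := Real.sq_sqrt hl.le
  have hs0 : 0 ≤ Real.sqrt l := Real.sqrt_nonneg l
  constructor
  · positivity
  · rw [div_le_one h1]; nlinarith [sq_nonneg (Real.sqrt l - 1)]

lemma wd_apply {α : Type*} [MeasurableSpace α] {μ : Measure α} {p : α → ℝ}
    (hp0 : ∀ x, 0 ≤ p x) (hpi : Integrable p μ) {A : Set α} (hA : MeasurableSet A) :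
    ((μ.withDensity fun x => ENNReal.ofReal (p x)) A).toReal = ∫ x in A, p x ∂μ := by
  rw [withDensity_apply _ hA,
    ← ofReal_integral_eq_lintegral_ofReal hpi.restrict (Filter.Eventually.of_forall hp0),
    ENNReal.toReal_ofReal (integral_nonneg hp0)]

lemma tv_sq_bound {α : Type*} [MeasurableSpace α] (μ : Measure α) (p q : α → ℝ)
    (hp0 : ∀ x, 0 ≤ p x) (hq0 : ∀ x, 0 ≤ q x)
    (hpi : Integrable p μ) (hqi : Integrable q μ)
    (hp1 : ∫ x, p x ∂μ = 1) (hq1 : ∫ x, q x ∂μ = 1)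
    (hpq : Integrable (fun x => Real.sqrt (p x * q x)) μ)
    {B : ℝ} (hB : ∫ x, Real.sqrt (p x * q x) ∂μ = B) (hB1 : B ≤ 1) :
    dTV (μ.withDensity fun x => ENNReal.ofReal (p x))
        (μ.withDensity fun x => ENNReal.ofReal (q x)) ^ 2 ≤ 1 - B ^ 2 := by
  set f : α → ℝ := fun x => Real.sqrt (p x) with hf
  set g : α → ℝ := fun x => Real.sqrt (q x) with hg
  have hB0 : 0 ≤ B := hB ▸ integral_nonneg fun x => Real.sqrt_nonneg _
  have hfsq : ∀ x, f x ^ 2 = p x := fun x => Real.sq_sqrt (hp0 x)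
  have hgsq : ∀ x, g x ^ 2 = q x := fun x => Real.sq_sqrt (hq0 x)
  have hfg : ∀ x, f x * g x = Real.sqrt (p x * q x) := fun x =>
    (Real.sqrt_mul (hp0 x) (q x)).symm
  have hfm : AEStronglyMeasurable f μ :=
    Real.continuous_sqrt.comp_aestronglyMeasurable hpi.1
  have hgm : AEStronglyMeasurable g μ :=
    Real.continuous_sqrt.comp_aestronglyMeasurable hqi.1
  have hfL2 : MemLp f 2 μ := by
    rw [memLp_two_iff_integrable_sq hfm]
    exact hpi.congr (Filter.Eventually.of_forall fun x => (hfsq x).symm)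
  have hgL2 : MemLp g 2 μ := by
    rw [memLp_two_iff_integrable_sq hgm]
    exact hqi.congr (Filter.Eventually.of_forall fun x => (hgsq x).symm)
  have hsubL2 : MemLp (fun x => f x - g x) 2 μ := hfL2.sub hgL2
  have haddL2 : MemLp (fun x => f x + g x) 2 μ := hfL2.add hgL2
  have hsubval : ∫ x, (f x - g x) ^ 2 ∂μ = 2 - 2 * B := by
    have h : ∀ x, (f x - g x) ^ 2 = p x + q x - 2 * Real.sqrt (p x * q x) := by
      intro x; rw [← hfg x, ← hfsq x, ← hgsq x]; ring
    rw [integral_congr_ae (Filter.Eventually.of_forall h),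
      integral_sub (f := fun x => p x + q x) (g := fun x => 2 * Real.sqrt (p x * q x))
        (hpi.add hqi) (hpq.const_mul 2),
      integral_add hpi hqi, hp1, hq1, integral_const_mul, hB]
    ring
  have haddval : ∫ x, (f x + g x) ^ 2 ∂μ = 2 + 2 * B := by
    have h : ∀ x, (f x + g x) ^ 2 = p x + q x + 2 * Real.sqrt (p x * q x) := by
      intro x; rw [← hfg x, ← hfsq x, ← hgsq x]; ring
    rw [integral_congr_ae (Filter.Eventually.of_forall h),
      integral_add (f := fun x => p x + q x) (g := fun x => 2 * Real.sqrt (p x * q x))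
        (hpi.add hqi) (hpq.const_mul 2),
      integral_add hpi hqi, hp1, hq1, integral_const_mul, hB]
    ring
  have hconj : (2 : ℝ).HolderConjugate 2 := Real.holderConjugate_iff.mpr ⟨one_lt_two, by norm_num⟩
  have habsL2 : MemLp (fun x => |f x - g x|) 2 μ := hsubL2.abs
  have hL1 : ∫ x, |p x - q x| ∂μ ≤ 2 * Real.sqrt (1 - B ^ 2) := by
    have key : ∀ x, |p x - q x| = |f x - g x| * (f x + g x) := by
      intro x
      calc |p x - q x| = |(f x - g x) * (f x + g x)| := by
            rw [← hfsq x, ← hgsq x]; exact congrArg abs (by ring)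
        _ = |f x - g x| * |f x + g x| := abs_mul _ _
        _ = |f x - g x| * (f x + g x) := by
            rw [abs_of_nonneg (add_nonneg (Real.sqrt_nonneg _) (Real.sqrt_nonneg _))]
    rw [integral_congr_ae (Filter.Eventually.of_forall key)]
    have holder := integral_mul_le_Lp_mul_Lq_of_nonneg hconj
      (f := fun x => |f x - g x|) (g := fun x => f x + g x)
      (Filter.Eventually.of_forall fun x => abs_nonneg _)
      (Filter.Eventually.of_forall fun x => add_nonneg (Real.sqrt_nonneg _) (Real.sqrt_nonneg _))
      (by simpa using habsL2) (by simpa using haddL2)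
    have holder' : ∫ a, |f a - g a| * (f a + g a) ∂μ ≤
        (∫ a, |f a - g a| ^ (2:ℝ) ∂μ) ^ ((1:ℝ)/2) * (∫ a, (f a + g a) ^ (2:ℝ) ∂μ) ^ ((1:ℝ)/2) :=
      holder
    have e1 : ∫ a, |f a - g a| ^ (2:ℝ) ∂μ = 2 - 2 * B := by
      rw [← hsubval]
      refine integral_congr_ae (Filter.Eventually.of_forall fun x => ?_)
      show |f x - g x| ^ (2:ℝ) = (f x - g x) ^ 2
      rw [Real.rpow_two, sq_abs]
    have e2 : ∫ a, (f a + g a) ^ (2:ℝ) ∂μ = 2 + 2 * B := by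
      rw [← haddval]
      refine integral_congr_ae (Filter.Eventually.of_forall fun x => ?_)
      show (f x + g x) ^ (2:ℝ) = (f x + g x) ^ 2
      rw [Real.rpow_two]
    rw [e1, e2] at holder'
    refine holder'.trans ?_
    have h1 : (0:ℝ) ≤ 2 - 2 * B := by linarith
    have h2 : (0:ℝ) ≤ 2 + 2 * B := by linarith
    rw [← Real.sqrt_eq_rpow, ← Real.sqrt_eq_rpow, ← Real.sqrt_mul h1]
    have h4 : (2 - 2 * B) * (2 + 2 * B) = 4 * (1 - B ^ 2) := by ring
    rw [h4, Real.sqrt_mul (by norm_num : (0:ℝ) ≤ 4), show Real.sqrt 4 = 2 by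
      rw [show (4:ℝ) = 2^2 by norm_num, Real.sqrt_sq (by norm_num : (0:ℝ) ≤ 2)]]
  have hset : ∀ A : Set α, MeasurableSet A →
      |((μ.withDensity fun x => ENNReal.ofReal (p x)) A).toReal -
        ((μ.withDensity fun x => ENNReal.ofReal (q x)) A).toReal| ≤ Real.sqrt (1 - B ^ 2) := by
    intro A hA
    rw [wd_apply hp0 hpi hA, wd_apply hq0 hqi hA, ← integral_sub hpi.restrict hqi.restrict]
    have hd : Integrable (fun x => p x - q x) μ := hpi.sub hqi
    have htot : (∫ x in A, (p x - q x) ∂μ) + ∫ x in Aᶜ, (p x - q x) ∂μ = 0 := by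
      rw [integral_add_compl hA hd, integral_sub hpi hqi, hp1, hq1]; ring
    have habs : (∫ x in A, |p x - q x| ∂μ) + ∫ x in Aᶜ, |p x - q x| ∂μ
        = ∫ x, |p x - q x| ∂μ := integral_add_compl hA hd.abs
    have b1 : |∫ x in A, (p x - q x) ∂μ| ≤ ∫ x in A, |p x - q x| ∂μ := by
      simpa [Real.norm_eq_abs] using
        norm_integral_le_integral_norm (μ := μ.restrict A) (fun x => p x - q x)
    have b2 : |∫ x in Aᶜ, (p x - q x) ∂μ| ≤ ∫ x in Aᶜ, |p x - q x| ∂μ := by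
      simpa [Real.norm_eq_abs] using
        norm_integral_le_integral_norm (μ := μ.restrict Aᶜ) (fun x => p x - q x)
    have h2 : 2 * |∫ x in A, (p x - q x) ∂μ| ≤ 2 * Real.sqrt (1 - B ^ 2) := by
      have hAc : |∫ x in Aᶜ, (p x - q x) ∂μ| = |∫ x in A, (p x - q x) ∂μ| := by
        have h5 : ∫ x in Aᶜ, (p x - q x) ∂μ = -∫ x in A, (p x - q x) ∂μ := by linarith
        rw [h5, abs_neg]
      calc 2 * |∫ x in A, (p x - q x) ∂μ|
          = |∫ x in A, (p x - q x) ∂μ| + |∫ x in Aᶜ, (p x - q x) ∂μ| := by rw [hAc]; ring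
        _ ≤ (∫ x in A, |p x - q x| ∂μ) + ∫ x in Aᶜ, |p x - q x| ∂μ := add_le_add b1 b2
        _ = ∫ x, |p x - q x| ∂μ := habs
        _ ≤ 2 * Real.sqrt (1 - B ^ 2) := hL1
    linarith
  have hsup : dTV (μ.withDensity fun x => ENNReal.ofReal (p x))
      (μ.withDensity fun x => ENNReal.ofReal (q x)) ≤ Real.sqrt (1 - B ^ 2) :=
    ciSup_le fun A => hset A.1 A.2
  have hnn : 0 ≤ dTV (μ.withDensity fun x => ENNReal.ofReal (p x))
      (μ.withDensity fun x => ENNReal.ofReal (q x)) :=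
    Real.iSup_nonneg fun A => abs_nonneg _
  calc dTV _ _ ^ 2 ≤ Real.sqrt (1 - B ^ 2) ^ 2 := pow_le_pow_left₀ hnn hsup 2
    _ = 1 - B ^ 2 := Real.sq_sqrt (by nlinarith)

lemma prod_const_rpow {ℓ : ℕ} (a : ℝ) (ha : 0 < a) (r : ℝ) :
    a ^ (-(ℓ:ℝ) * r) = ∏ _i : Fin ℓ, a ^ (-r) := by
  rw [Finset.prod_const, Finset.card_univ, Fintype.card_fin,
    ← Real.rpow_natCast (a ^ (-r)) ℓ, ← Real.rpow_mul ha.le]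
  ring_nf

lemma prod_lam_rpow {ℓ : ℕ} (lam : Fin ℓ → ℝ) (hl : ∀ i, 0 < lam i) (r : ℝ) :
    (∏ i, lam i) ^ r = ∏ i, (lam i) ^ r :=
  (Real.finset_prod_rpow _ _ (fun i _ => (hl i).le) r).symm

lemma fact1 (l : ℝ) (hl : 0 < l) :
    (2 * π) ^ (-(1:ℝ)/2) * l ^ (-(1:ℝ)/2) * Real.sqrt (2 * π * l) = 1 := by
  have h2π : (0:ℝ) < 2 * π := by positivity
  rw [show (-(1:ℝ)/2) = -(1/2 : ℝ) by norm_num, Real.rpow_neg h2π.le, Real.rpow_neg hl.le,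
    ← Real.sqrt_eq_rpow, ← Real.sqrt_eq_rpow, Real.sqrt_mul h2π.le]
  have hs1 : (0:ℝ) < Real.sqrt (2 * π) := Real.sqrt_pos.mpr h2π
  have hs2 : (0:ℝ) < Real.sqrt l := Real.sqrt_pos.mpr hl
  field_simp

lemma fact2 (l : ℝ) (hl : 0 < l) :
    (2 * π) ^ (-(1:ℝ)) * l ^ (-(1:ℝ)/2) * (π / ((1 + l⁻¹) / 4))
      = 2 * Real.sqrt l / (l + 1) := by
  have h2π : (0:ℝ) < 2 * π := by positivity
  have hπ : (0:ℝ) < π := Real.pi_pos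
  rw [show (-(1:ℝ)/2) = -(1/2 : ℝ) by norm_num, Real.rpow_neg hl.le,
    ← Real.sqrt_eq_rpow, Real.rpow_neg_one]
  have hs2 : (0:ℝ) < Real.sqrt l := Real.sqrt_pos.mpr hl
  have hll : Real.sqrt l * Real.sqrt l = l := Real.mul_self_sqrt hl.le
  have hl1 : (0:ℝ) < 1 + l⁻¹ := by positivity
  have hl2 : (0:ℝ) < l + 1 := by linarith
  field_simp
  nlinarith [hll, hπ, hs2, mul_pos hπ hl2, mul_pos (mul_pos hπ hl2) hl]

end Aux

/-- For `Z₁ ~ N(0, I_ℓ)` and `Z₂ ~ N(0, Σ)` with `Σ` symmetric positive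
definite with eigenvalues `λ₁, …, λ_ℓ`,
`d_TV(Z₁, Z₂)² ≤ Σᵢ (√λᵢ − 1)²/(λᵢ + 1) ≤ ‖Σ − I‖_F²`. -/
theorem stmt_4 (ℓ : ℕ) (S : Matrix (Fin ℓ) (Fin ℓ) ℝ) (hS : S.PosDef) :
    dTV (gaussMeasure ℓ 1) (gaussMeasure ℓ S) ^ 2 ≤
      ∑ i, (Real.sqrt (hS.1.eigenvalues i) - 1) ^ 2 / (hS.1.eigenvalues i + 1) ∧
    ∑ i, (Real.sqrt (hS.1.eigenvalues i) - 1) ^ 2 / (hS.1.eigenvalues i + 1) ≤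
      frobNorm (S - 1) ^ 2 := by
  classical
  set lam := hS.1.eigenvalues with hlam
  have hlpos : ∀ i, 0 < lam i := fun i => hS.eigenvalues_pos i
  obtain ⟨Q, h1, h2, hspec⟩ : ∃ Q : Matrix (Fin ℓ) (Fin ℓ) ℝ, Q * Qᵀ = 1 ∧ Qᵀ * Q = 1 ∧
      S = Q * Matrix.diagonal lam * Qᵀ := by
    refine ⟨(hS.1.eigenvectorUnitary : Matrix (Fin ℓ) (Fin ℓ) ℝ), ?_, ?_, ?_⟩
    · have h := (Matrix.mem_unitaryGroup_iff).mp hS.1.eigenvectorUnitary.2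
      rwa [Matrix.star_eq_conjTranspose, Matrix.conjTranspose_eq_transpose_of_trivial] at h
    · have h := (Matrix.mem_unitaryGroup_iff').mp hS.1.eigenvectorUnitary.2
      rwa [Matrix.star_eq_conjTranspose, Matrix.conjTranspose_eq_transpose_of_trivial] at h
    · have h := hS.1.spectral_theorem
      rwa [Unitary.conjStarAlgAut_apply, Matrix.star_eq_conjTranspose, Matrix.conjTranspose_eq_transpose_of_trivial,
        show (RCLike.ofReal ∘ hS.1.eigenvalues : Fin ℓ → ℝ) = lam from rfl] at h
  -- second inequality
  have second : ∑ i, (Real.sqrt (lam i) - 1) ^ 2 / (lam i + 1) ≤ frobNorm (S - 1) ^ 2 := by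
    have hfnn : 0 ≤ ∑ i, ∑ j, (S - 1) i j ^ 2 :=
      Finset.sum_nonneg fun i _ => Finset.sum_nonneg fun j _ => sq_nonneg _
    rw [frobNorm, Real.sq_sqrt hfnn, frob_eq lam Q h1 h2 S hspec]
    exact Finset.sum_le_sum fun i _ => term_le (lam i) (hlpos i)
  refine ⟨?_, second⟩
  -- setup
  have hSinv : S⁻¹ = Q * Matrix.diagonal (fun i => (lam i)⁻¹) * Qᵀ := by
    apply Matrix.inv_eq_left_inv
    rw [hspec]
    rw [show Q * Matrix.diagonal (fun i => (lam i)⁻¹) * Qᵀ * (Q * Matrix.diagonal lam * Qᵀ)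
        = Q * (Matrix.diagonal (fun i => (lam i)⁻¹) * Matrix.diagonal lam) * Qᵀ by
      rw [mul_assoc (Q * Matrix.diagonal fun i => (lam i)⁻¹) Qᵀ _,
        ← mul_assoc Qᵀ (Q * Matrix.diagonal lam) Qᵀ, ← mul_assoc Qᵀ Q (Matrix.diagonal lam),
        h2, one_mul, ← mul_assoc, mul_assoc Q _ _]]
    rw [Matrix.diagonal_mul_diagonal,
      show (fun i => (lam i)⁻¹ * lam i) = fun _ => (1:ℝ) from
        funext fun i => inv_mul_cancel₀ (hlpos i).ne', Matrix.diagonal_one, mul_one, h1]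
  have hdet : S.det = ∏ i, lam i := by
    have hdQ : Q.det * Qᵀ.det = 1 := by rw [← Matrix.det_mul, h1, Matrix.det_one]
    rw [hspec, Matrix.det_mul, Matrix.det_mul, Matrix.det_diagonal,
      show (Q.det * ∏ i, lam i) * Qᵀ.det = (Q.det * Qᵀ.det) * ∏ i, lam i by ring, hdQ, one_mul]
  have hdet0 : 0 < S.det := hS.det_pos
  set c : ℝ := (2 * Real.pi) ^ (-(ℓ:ℝ)/2) with hc
  have h2π : (0:ℝ) < 2 * Real.pi := by positivity
  have hc0 : 0 < c := Real.rpow_pos_of_pos h2π _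
  set c2 : ℝ := c * S.det ^ (-(1:ℝ)/2) with hc2
  have hc20 : 0 < c2 := mul_pos hc0 (Real.rpow_pos_of_pos hdet0 _)
  -- pointwise forms
  have hp_eq : ∀ x, gaussPdf ℓ 1 x = c * Real.exp (-(x ⬝ᵥ x)/2) := by
    intro x
    rw [gaussPdf, Matrix.det_one, Real.one_rpow, mul_one, show (1 : Matrix (Fin ℓ) (Fin ℓ) ℝ)⁻¹ = 1 from Matrix.inv_eq_left_inv (by rw [mul_one]), Matrix.one_mulVec]
  have hq_eq : ∀ x, gaussPdf ℓ S x = c2 * Real.exp (-(x ⬝ᵥ S⁻¹.mulVec x)/2) := fun x => rfl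
  have hq1v : ∀ v : Fin ℓ → ℝ, (Q.mulVec v) ⬝ᵥ (Q.mulVec v) = ∑ i, v i ^ 2 := by
    intro v
    have h := quad_form (fun _ => (1:ℝ)) Q h2 v
    rw [Matrix.diagonal_one, mul_one, h1, Matrix.one_mulVec] at h
    rw [h]
    exact Finset.sum_congr rfl fun i _ => by ring
  have hq2v : ∀ v : Fin ℓ → ℝ,
      (Q.mulVec v) ⬝ᵥ S⁻¹.mulVec (Q.mulVec v) = ∑ i, (lam i)⁻¹ * v i ^ 2 := by
    intro v
    rw [hSinv]
    exact quad_form (fun i => (lam i)⁻¹) Q h2 v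
  -- composed forms
  have hsum_half : ∀ (a : Fin ℓ → ℝ), -(∑ i, a i)/2 = -∑ i, a i / 2 := by
    intro a
    rw [neg_div]
    congr 1
    rw [Finset.sum_div]
  have hp_comp : ∀ v, gaussPdf ℓ 1 (Q.mulVec v)
      = c * Real.exp (-∑ i, (1/2 : ℝ) * v i ^ 2) := by
    intro v
    rw [hp_eq, hq1v v]
    congr 1
    rw [hsum_half]
    exact congrArg Real.exp (neg_inj.mpr (Finset.sum_congr rfl fun i _ => by ring))
  have hq_comp : ∀ v, gaussPdf ℓ S (Q.mulVec v)
      = c2 * Real.exp (-∑ i, ((lam i)⁻¹ / 2) * v i ^ 2) := by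
    intro v
    rw [hq_eq, hq2v v]
    congr 1
    rw [hsum_half]
    exact congrArg Real.exp (neg_inj.mpr (Finset.sum_congr rfl fun i _ => by ring))
  have hpq_comp : ∀ v, Real.sqrt (gaussPdf ℓ 1 (Q.mulVec v) * gaussPdf ℓ S (Q.mulVec v))
      = Real.sqrt (c * c2) * Real.exp (-∑ i, ((1 + (lam i)⁻¹) / 4) * v i ^ 2) := by
    intro v
    rw [hp_comp v, hq_comp v,
      show c * Real.exp (-∑ i, (1/2 : ℝ) * v i ^ 2)
          * (c2 * Real.exp (-∑ i, ((lam i)⁻¹ / 2) * v i ^ 2))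
        = (c * c2) * Real.exp ((-∑ i, (1/2 : ℝ) * v i ^ 2)
            + (-∑ i, ((lam i)⁻¹ / 2) * v i ^ 2)) by rw [Real.exp_add]; ring,
      Real.sqrt_mul (mul_nonneg hc0.le hc20.le), ← Real.exp_half]
    congr 1
    rw [← neg_add, ← Finset.sum_add_distrib, hsum_half]
    exact congrArg Real.exp (neg_inj.mpr (Finset.sum_congr rfl fun i _ => by ring))
  -- measure preserving rotation
  have mp := rot_mp Q h1
  have emb := rot_emb Q h1 h2
  -- positivity of densities
  have hp0 : ∀ x, 0 ≤ gaussPdf ℓ 1 x := fun x => by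
    rw [hp_eq]; positivity
  have hq0 : ∀ x, 0 ≤ gaussPdf ℓ S x := fun x => by
    rw [hq_eq]; positivity
  -- integrability
  have hcq : ∀ i, (0:ℝ) < (lam i)⁻¹ / 2 := fun i => by
    have := hlpos i; positivity
  have hcpq : ∀ i, (0:ℝ) < (1 + (lam i)⁻¹) / 4 := fun i => by
    have := hlpos i; positivity
  have hpfe : gaussPdf ℓ 1 = fun x => c * Real.exp (-∑ i, (1/2 : ℝ) * x i ^ 2) := by
    funext x
    rw [hp_eq]
    congr 1
    rw [show x ⬝ᵥ x = ∑ i, x i * x i from rfl, hsum_half]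
    exact congrArg Real.exp (neg_inj.mpr (Finset.sum_congr rfl fun i _ => by ring))
  have hpi : Integrable (gaussPdf ℓ 1) volume := by
    rw [hpfe]
    exact (gauss_integrable _ (fun _ => by norm_num)).const_mul c
  have hqi : Integrable (gaussPdf ℓ S) volume := by
    rw [← mp.integrable_comp_emb emb]
    have h : (gaussPdf ℓ S ∘ fun v => Q.mulVec v)
        = fun v => c2 * Real.exp (-∑ i, ((lam i)⁻¹ / 2) * v i ^ 2) :=
      funext fun v => hq_comp v
    rw [h]
    exact (gauss_integrable _ hcq).const_mul c2
  have hpqi : Integrable (fun x => Real.sqrt (gaussPdf ℓ 1 x * gaussPdf ℓ S x)) volume := by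
    rw [← mp.integrable_comp_emb emb]
    have h : ((fun x => Real.sqrt (gaussPdf ℓ 1 x * gaussPdf ℓ S x)) ∘ fun v => Q.mulVec v)
        = fun v => Real.sqrt (c * c2) * Real.exp (-∑ i, ((1 + (lam i)⁻¹) / 4) * v i ^ 2) :=
      funext fun v => hpq_comp v
    rw [h]
    exact (gauss_integrable _ hcpq).const_mul _
  -- normalization of p
  open Real in
  have fact0 : (2 * π) ^ (-(1:ℝ)/2) * Real.sqrt (2 * π) = 1 := by
    have h := fact1 1 one_pos
    rwa [Real.one_rpow, mul_one, mul_one] at h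
  have hcprod : c = ∏ _i : Fin ℓ, (2 * Real.pi) ^ (-(1:ℝ)/2) := by
    rw [hc, Finset.prod_const, Finset.card_univ, Fintype.card_fin,
      ← Real.rpow_natCast ((2 * Real.pi) ^ (-(1:ℝ)/2)) ℓ, ← Real.rpow_mul h2π.le]
    ring_nf
  have hp1 : ∫ x, gaussPdf ℓ 1 x = 1 := by
    rw [hpfe, integral_const_mul, gauss_integral]
    have hπh : Real.pi / (1/2 : ℝ) = 2 * Real.pi := by field_simp
    calc c * ∏ _i : Fin ℓ, Real.sqrt (Real.pi / (1/2 : ℝ))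
        = (∏ _i : Fin ℓ, (2 * Real.pi) ^ (-(1:ℝ)/2)) * ∏ _i : Fin ℓ, Real.sqrt (2 * Real.pi) := by
          rw [← hcprod]
          congr 1
          exact Finset.prod_congr rfl fun i _ => by rw [hπh]
      _ = ∏ _i : Fin ℓ, ((2 * Real.pi) ^ (-(1:ℝ)/2) * Real.sqrt (2 * Real.pi)) := by
          rw [← Finset.prod_mul_distrib]
      _ = 1 := by
          rw [Finset.prod_congr rfl fun i _ => fact0, Finset.prod_const_one]
  -- normalization of q
  have hq1int : ∫ x, gaussPdf ℓ S x = 1 := by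
    rw [← mp.integral_comp emb (gaussPdf ℓ S)]
    rw [integral_congr_ae (Filter.Eventually.of_forall fun v => hq_comp v),
      integral_const_mul, gauss_integral]
    have hπl : ∀ i, Real.pi / ((lam i)⁻¹ / 2) = 2 * Real.pi * lam i := fun i => by
      have := hlpos i; field_simp
    calc c2 * ∏ i, Real.sqrt (Real.pi / ((lam i)⁻¹ / 2))
        = (∏ _i : Fin ℓ, (2 * Real.pi) ^ (-(1:ℝ)/2)) * (∏ i, (lam i) ^ (-(1:ℝ)/2))
            * ∏ i, Real.sqrt (2 * Real.pi * lam i) := by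
          rw [hc2, ← hcprod, hdet, prod_lam_rpow lam hlpos]
          rw [mul_assoc, mul_assoc]
          congr 2
          exact Finset.prod_congr rfl fun i _ => by rw [hπl i]
      _ = ∏ i, ((2 * Real.pi) ^ (-(1:ℝ)/2) * (lam i) ^ (-(1:ℝ)/2)
            * Real.sqrt (2 * Real.pi * lam i)) := by
          rw [← Finset.prod_mul_distrib, ← Finset.prod_mul_distrib]
      _ = 1 := by
          rw [Finset.prod_congr rfl fun i _ => fact1 (lam i) (hlpos i), Finset.prod_const_one]
  -- Bhattacharyya coefficient
  set Bv : ℝ := ∫ x, Real.sqrt (gaussPdf ℓ 1 x * gaussPdf ℓ S x) with hBv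
  have hBval : Bv = Real.sqrt (c * c2) * ∏ i, Real.sqrt (Real.pi / ((1 + (lam i)⁻¹) / 4)) := by
    rw [hBv, ← mp.integral_comp emb (fun x => Real.sqrt (gaussPdf ℓ 1 x * gaussPdf ℓ S x)),
      integral_congr_ae (Filter.Eventually.of_forall fun v => hpq_comp v),
      integral_const_mul, gauss_integral]
  have hBsq : Bv ^ 2 = ∏ i, 2 * Real.sqrt (lam i) / (lam i + 1) := by
    have hcc2 : 0 ≤ c * c2 := mul_nonneg hc0.le hc20.le
    have step1 : Bv ^ 2 = (c * c2) * ∏ i, Real.pi / ((1 + (lam i)⁻¹) / 4) := by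
      rw [hBval, mul_pow, Real.sq_sqrt hcc2, ← Finset.prod_pow]
      congr 1
      refine Finset.prod_congr rfl fun i _ => Real.sq_sqrt ?_
      have := hlpos i; positivity
    have step2 : c * c2 = (∏ _i : Fin ℓ, (2 * Real.pi) ^ (-(1:ℝ)))
        * ∏ i, (lam i) ^ (-(1:ℝ)/2) := by
      rw [hc2, ← mul_assoc, hc, ← Real.rpow_add h2π, hdet, prod_lam_rpow lam hlpos,
        show (-(ℓ:ℝ)/2 + -(ℓ:ℝ)/2) = -(ℓ:ℝ) by ring]
      congr 1
      rw [Finset.prod_const, Finset.card_univ, Fintype.card_fin,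
        ← Real.rpow_natCast ((2 * Real.pi) ^ (-(1:ℝ))) ℓ, ← Real.rpow_mul h2π.le]
      ring_nf
    rw [step1, step2, mul_assoc, ← Finset.prod_mul_distrib, ← Finset.prod_mul_distrib]
    exact Finset.prod_congr rfl fun i _ => by
      rw [← mul_assoc]; exact fact2 (lam i) (hlpos i)
  have hBv0 : 0 ≤ Bv := hBv ▸ integral_nonneg fun x => Real.sqrt_nonneg _
  have hprodx1 : ∏ i, 2 * Real.sqrt (lam i) / (lam i + 1) ≤ 1 :=
    Finset.prod_le_one (fun i _ => (term_mem (lam i) (hlpos i)).1)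
      (fun i _ => (term_mem (lam i) (hlpos i)).2)
  have hB1 : Bv ≤ 1 := by nlinarith [hBsq, hprodx1, hBv0]
  have main := tv_sq_bound volume (gaussPdf ℓ 1) (gaussPdf ℓ S) hp0 hq0 hpi hqi hp1 hq1int
    hpqi (hBv.symm) hB1
  calc dTV (gaussMeasure ℓ 1) (gaussMeasure ℓ S) ^ 2
      ≤ 1 - Bv ^ 2 := main
    _ = 1 - ∏ i, 2 * Real.sqrt (lam i) / (lam i + 1) := by rw [hBsq]
    _ ≤ ∑ i, (1 - 2 * Real.sqrt (lam i) / (lam i + 1)) :=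
        aux_one_sub_prod_le Finset.univ _ (fun i _ => (term_mem (lam i) (hlpos i)).1)
          (fun i _ => (term_mem (lam i) (hlpos i)).2)
    _ = ∑ i, (Real.sqrt (lam i) - 1) ^ 2 / (lam i + 1) :=
        Finset.sum_congr rfl fun i _ => term_id (lam i) (hlpos i)
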